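/- arXiv:2601.01930 — 2 statements merged into one kernel-verified Lean document; each statement's English description precedes it below -/
import Mathlib

section
/- Let V be a finite set of points in a metric space with all pairwise distances distinct. Every edge of the Euclidean Minimum Spanning Tree of V is an edge of the Relative Neighborhood Graph of V: if (u,v) ∈ E_EMST, then no point n ∈ V satisfies both d(n,u) < d(u,v) and d(n,v) < d(u,v). -/
/-!
Deleting a tree edge `uv` splits the tree into the side of `u` and the side of `v`. A witness `n`
lies on one side, say that of `u`; reconnecting the two sides by the edge `nv` gives another
spanning tree, heavier than the minimal one by `d(n, v) - d(u, v)`, which must therefore be `≥ 0`.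
-/

namespace SimpleGraph

variable {V : Type*} {G : SimpleGraph V}

theorem Reachable.deleteEdges_reachable_or {a u : V} (h : G.Reachable a u) (v : V) :
    (G.deleteEdges {s(u, v)}).Reachable a u ∨ (G.deleteEdges {s(u, v)}).Reachable a v := by
  classical
  obtain ⟨p, hp⟩ := h.exists_isPath
  by_cases he : s(u, v) ∈ p.edges
  · have hvp := p.snd_mem_support_of_mem_edges he
    have hvu : u ≠ v := (p.adj_of_mem_edges he).ne
    have hu : u ∉ (p.takeUntil v hvp).support := Walk.endpoint_notMem_support_takeUntil hp hvp hvu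
    exact Or.inr (reachable_deleteEdges_iff_exists_walk.mpr
      ⟨p.takeUntil v hvp, fun h => hu ((p.takeUntil v hvp).fst_mem_support_of_mem_edges h)⟩)
  · exact Or.inl (reachable_deleteEdges_iff_exists_walk.mpr ⟨p, he⟩)

theorem IsTree.not_reachable_deleteEdges {u v : V} (hT : G.IsTree) (huv : G.Adj u v) :
    ¬(G.deleteEdges {s(u, v)}).Reachable u v :=
  isBridge_iff.mp (isAcyclic_iff_forall_adj_isBridge.mp hT.isAcyclic huv)

theorem IsTree.deleteEdges_sup_edge_of_reachable {u v n : V} (hT : G.IsTree) (huv : G.Adj u v)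
    (hnu : (G.deleteEdges {s(u, v)}).Reachable n u) :
    (G.deleteEdges {s(u, v)} ⊔ edge n v).IsTree := by
  have hnv : ¬(G.deleteEdges {s(u, v)}).Reachable n v := fun h =>
    hT.not_reachable_deleteEdges huv (hnu.symm.trans h)
  refine ⟨(connected_iff_exists_forall_reachable _).mpr ⟨u, fun a => ?_⟩,
    (hT.isAcyclic.anti (deleteEdges_le _)).sup_edge_of_not_reachable hnv⟩
  have hle : G.deleteEdges {s(u, v)} ≤ G.deleteEdges {s(u, v)} ⊔ edge n v := le_sup_left
  have hnv' : n ≠ v := by rintro rfl; exact hnv (Reachable.refl n)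
  have hadj : (G.deleteEdges {s(u, v)} ⊔ edge n v).Adj n v := by simp [edge_adj, hnv']
  rcases (hT.connected a u).deleteEdges_reachable_or v with h | h
  · exact (h.mono hle).symm
  · exact (hnu.mono hle).symm.trans (hadj.reachable.trans (h.mono hle).symm)

variable {M : Type*} [AddCommMonoid M] (f : Sym2 V → M)

theorem sum_edgeFinset_deleteEdges_add {e : Sym2 V} [Fintype G.edgeSet]
    [Fintype (G.deleteEdges {e}).edgeSet] (he : e ∈ G.edgeSet) :
    ∑ x ∈ (G.deleteEdges {e}).edgeFinset, f x + f e = ∑ x ∈ G.edgeFinset, f x := by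
  classical
  have : (G.deleteEdges {e}).edgeFinset = G.edgeFinset.erase e := by
    ext x; simp [and_comm]
  rw [this, Finset.sum_erase_add _ _ (mem_edgeFinset.mpr he)]

theorem sum_edgeFinset_sup_edge {s t : V} [Fintype G.edgeSet] [Fintype (G ⊔ edge s t).edgeSet]
    (hst : s ≠ t) (hG : ¬G.Adj s t) :
    ∑ x ∈ (G ⊔ edge s t).edgeFinset, f x = ∑ x ∈ G.edgeFinset, f x + f s(s, t) := by
  classical
  have : (G ⊔ edge s t).edgeFinset = insert s(s, t) G.edgeFinset := by
    ext x; simp [edgeSet_edge_of_ne hst, or_comm]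
  rw [this, Finset.sum_insert (by simpa using hG), add_comm]

end SimpleGraph

open SimpleGraph in
theorem emst_subset_rng_general
    {X : Type*} [MetricSpace X] [Fintype X]
    (T : SimpleGraph X) [Fintype T.edgeSet]
    (hT : T.IsTree)
    (hmin : ∀ (T' : SimpleGraph X) [Fintype T'.edgeSet], T'.IsTree →
      ∑ e ∈ T.edgeFinset, Sym2.lift ⟨dist, fun a b => dist_comm a b⟩ e
        ≤ ∑ e ∈ T'.edgeFinset, Sym2.lift ⟨dist, fun a b => dist_comm a b⟩ e)
    (u v : X) (huv : T.Adj u v) :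
    ¬ ∃ n : X, dist n u < dist u v ∧ dist n v < dist u v := by
  rintro ⟨n, hnu, hnv⟩
  classical
  set w : Sym2 X → ℝ := Sym2.lift ⟨dist, fun a b => dist_comm a b⟩
  have exchange : ∀ a b, T.Adj a b → (T.deleteEdges {s(a, b)}).Reachable n a →
      dist a b ≤ dist n b := by
    intro a b hab hna
    have hnb : ¬(T.deleteEdges {s(a, b)}).Reachable n b := fun h =>
      hT.not_reachable_deleteEdges hab (hna.symm.trans h)
    have hle := hmin _ (hT.deleteEdges_sup_edge_of_reachable hab hna)
    have hnb' : n ≠ b := by rintro rfl; exact hnb (Reachable.refl n)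
    rw [sum_edgeFinset_sup_edge w hnb' (fun h => hnb h.reachable),
      ← sum_edgeFinset_deleteEdges_add w (T.mem_edgeSet.mpr hab)] at hle
    simpa [w] using hle
  rcases (hT.connected n u).deleteEdges_reachable_or v with h | h
  · exact (exchange u v huv h).not_gt hnv
  · rw [Sym2.eq_swap] at h
    exact (exchange v u huv.symm h).not_gt (by rwa [dist_comm v u])

/-- Toussaint: every edge of a minimum spanning tree (w.r.t. the metric weight)
belongs to the Relative Neighborhood Graph: no point n satisfies both
d(n,u) < d(u,v) and d(n,v) < d(u,v). -/
theorem emst_subset_rng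
    {X : Type*} [MetricSpace X] [Fintype X]
    (hgen : ∀ a b c e : X, a ≠ b → c ≠ e → ({a, b} : Set X) ≠ {c, e} →
      dist a b ≠ dist c e)
    (T : SimpleGraph X) [Fintype T.edgeSet]
    (hT : T.IsTree)
    (hmin : ∀ (T' : SimpleGraph X) [Fintype T'.edgeSet], T'.IsTree →
      ∑ e ∈ T.edgeFinset, Sym2.lift ⟨dist, fun a b => dist_comm a b⟩ e
        ≤ ∑ e ∈ T'.edgeFinset, Sym2.lift ⟨dist, fun a b => dist_comm a b⟩ e)
    (u v : X) (huv : T.Adj u v) :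
    ¬ ∃ n : X, dist n u < dist u v ∧ dist n v < dist u v :=
  emst_subset_rng_general T hT hmin u v huv
end

section
/- Let V be a finite set of points in a metric space with all pairwise distances distinct, and let α : V → ℝ satisfy α(u) ≥ 1 for all u. With E_MCGI defined by: (u,v) ∈ E_MCGI iff no n ∈ V \ {u,v} satisfies d(n,v) ≤ d(u,v)/α(u) and d(n,u) ≤ d(u,v). Then the graph (V, E_MCGI) is connected. -/
/-- Connectivity of the MCGI graph: with per-node pruning parameters α(u) ≥ 1,
the graph whose edges (u,v) survive the MCGI pruning test connects every pair
of points (via the symmetrized edge relation). -/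
theorem mcgi_connected
    {X : Type*} [MetricSpace X] [Fintype X] [Nonempty X]
    (hgen : ∀ a b c e : X, a ≠ b → c ≠ e → ({a, b} : Set X) ≠ {c, e} →
      dist a b ≠ dist c e)
    (α : X → ℝ) (hα : ∀ u : X, 1 ≤ α u)
    (E : X → X → Prop)
    (hE : ∀ u v : X, E u v ↔ u ≠ v ∧
      ¬ ∃ n : X, n ≠ u ∧ n ≠ v ∧ dist n v ≤ dist u v / α u ∧ dist n u ≤ dist u v) :
    ∀ u v : X, Relation.ReflTransGen (fun a b => E a b ∨ E b a) u v := by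
  -- measure: number of ordered pairs with strictly smaller distance
  classical
  set R := fun a b : X => E a b ∨ E b a with hR
  have key : ∀ N : ℕ, ∀ u v : X,
      (Finset.univ.filter (fun p : X × X => dist p.1 p.2 < dist u v)).card ≤ N →
      Relation.ReflTransGen R u v := by
    intro N
    induction N with
    | zero =>
      intro u v h
      rcases eq_or_ne u v with rfl | huv
      · exact Relation.ReflTransGen.refl
      · exfalso
        have hmem : (u, u) ∈ Finset.univ.filter
            (fun p : X × X => dist p.1 p.2 < dist u v) := by
          simp [dist_pos.mpr huv]
        have := Finset.card_pos.mpr ⟨_, hmem⟩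
        omega
    | succ N ih =>
      intro u v h
      rcases eq_or_ne u v with rfl | huv
      · exact Relation.ReflTransGen.refl
      by_cases hEuv : E u v
      · exact Relation.ReflTransGen.single (Or.inl hEuv)
      · -- extract a witness n
        have hex : ∃ n : X, n ≠ u ∧ n ≠ v ∧ dist n v ≤ dist u v / α u ∧
            dist n u ≤ dist u v := by
          by_contra hc
          exact hEuv ((hE u v).mpr ⟨huv, hc⟩)
        obtain ⟨n, hnu, hnv, h1, h2⟩ := hex
        have hαu : (1:ℝ) ≤ α u := hα u
        have hαpos : (0:ℝ) < α u := lt_of_lt_of_le one_pos hαu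
        have hdpos : 0 < dist u v := dist_pos.mpr huv
        have h1' : dist n v ≤ dist u v :=
          h1.trans (div_le_self hdpos.le hαu)
        -- strictness via general position
        have hset1 : ({n, u} : Set X) ≠ {u, v} := by
          intro hs
          have : v ∈ ({n, u} : Set X) := by rw [hs]; simp
          rcases this with h | h
          · exact hnv h.symm
          · exact huv h.symm
        have hset2 : ({n, v} : Set X) ≠ {u, v} := by
          intro hs
          have : u ∈ ({n, v} : Set X) := by rw [hs]; simp
          rcases this with h | h
          · exact hnu h.symm
          · exact huv h
        have hlt2 : dist n u < dist u v :=
          lt_of_le_of_ne h2 (hgen n u u v hnu huv hset1)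
        have hlt1 : dist n v < dist u v :=
          lt_of_le_of_ne h1' (hgen n v u v hnv huv hset2)
        -- the measure strictly decreases for both (u,n) and (n,v)
        have step : ∀ a b : X, dist a b < dist u v →
            (Finset.univ.filter (fun p : X × X => dist p.1 p.2 < dist a b)).card ≤ N := by
          intro a b hab
          have hss : (Finset.univ.filter (fun p : X × X => dist p.1 p.2 < dist a b)) ⊂
              (Finset.univ.filter (fun p : X × X => dist p.1 p.2 < dist u v)) := by
            constructor
            · intro p hp
              simp only [Finset.mem_filter, Finset.mem_univ, true_and] at hp ⊢
              exact hp.trans hab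
            · intro hsub
              have : (a, b) ∈ (Finset.univ.filter
                  (fun p : X × X => dist p.1 p.2 < dist a b)) := by
                apply hsub
                simp [hab]
              simp at this
          have := Finset.card_lt_card hss
          omega
        have hun : Relation.ReflTransGen R u n := by
          apply ih u n
          have : dist u n < dist u v := by rwa [dist_comm]
          exact step u n this
        have hnv' : Relation.ReflTransGen R n v := ih n v (step n v hlt1)
        exact hun.trans hnv'
  intro u v
  exact key _ u v le_rfl
end
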